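/- arXiv:2109.07286 — 3 statements merged into one kernel-verified Lean document; each statement's English description precedes it below -/
import Mathlib

section
/- A Stone topological algebra A is profinite if and only if for every clopen subset L of A, the syntactic congruence σ_L is clopen in A × A. -/
universe u v w

/-- The translation monoid `M(A)`: self-maps of `A` given by terms linear in a
distinguished variable, with all other variables evaluated in `A`. -/
inductive IsTranslation {Ω : ℕ → Type u} {A : Type v}
    (ops : ∀ n, Ω n → (Fin n → A) → A) : (A → A) → Prop
  | id_map : IsTranslation ops id
  | comp {n : ℕ} (w : Ω n) (i : Fin n) (v : Fin n → A) {f : A → A}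
      (hf : IsTranslation ops f) :
      IsTranslation ops (fun a => ops n w (Function.update v i (f a)))

/-- A congruence on an `Ω`-algebra. -/
def IsCongruence {Ω : ℕ → Type u} {A : Type v}
    (ops : ∀ n, Ω n → (Fin n → A) → A) (θ : A → A → Prop) : Prop :=
  Equivalence θ ∧
    ∀ ⦃n : ℕ⦄ (w : Ω n) (u v : Fin n → A),
      (∀ i, θ (u i) (v i)) → θ (ops n w u) (ops n w v)

/-- An equivalence relation saturates `L` when `L` is a union of its classes. -/
def Saturates {A : Type v} (θ : A → A → Prop) (L : Set A) : Prop :=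
  ∀ a a', θ a a' → (a ∈ L ↔ a' ∈ L)

/-- The syntactic congruence of `L ⊆ A`. -/
def synCong {Ω : ℕ → Type u} {A : Type v}
    (ops : ∀ n, Ω n → (Fin n → A) → A) (L : Set A) : A → A → Prop :=
  fun a a' => ∀ f : A → A, IsTranslation ops f → (f a ∈ L ↔ f a' ∈ L)

theorem synCong_equivalence {Ω : ℕ → Type u} {A : Type v}
    (ops : ∀ n, Ω n → (Fin n → A) → A) (L : Set A) :
    Equivalence (synCong ops L) :=
  ⟨fun _ _ _ => Iff.rfl, fun h f hf => (h f hf).symm,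
    fun h1 h2 f hf => (h1 f hf).trans (h2 f hf)⟩

/-- Residual finiteness: distinct points are separated by continuous
homomorphisms onto finite discrete algebras. -/
def ResiduallyFinite {Ω : ℕ → Type u} {A : Type v} [TopologicalSpace A]
    (ops : ∀ n, Ω n → (Fin n → A) → A) : Prop :=
  ∀ a a' : A, a ≠ a' →
    ∃ (B : Type v) (_ : Fintype B) (opsB : ∀ n, Ω n → (Fin n → B) → B) (φ : A → B),
      @Continuous A B _ ⊥ φ ∧
      (∀ (n : ℕ) (w : Ω n) (v : Fin n → A), φ (ops n w v) = opsB n w (fun i => φ (v i))) ∧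
      φ a ≠ φ a'

section AuxLemmas

variable {Ω : ℕ → Type u} {A : Type v} {ops : ∀ n, Ω n → (Fin n → A) → A}

lemma IsTranslation.comp' {f g : A → A} (hf : IsTranslation ops f)
    (hg : IsTranslation ops g) : IsTranslation ops (f ∘ g) := by
  induction hf with
  | id_map => exact hg
  | comp w i v hf ih => exact .comp w i v ih

/-- A one-variable substitution instance of an operation preserves `synCong`. -/
lemma synCong_step {L : Set A} {a b : A} (h : synCong ops L a b)
    {n : ℕ} (w : Ω n) (i : Fin n) (v : Fin n → A) :
    synCong ops L (ops n w (Function.update v i a)) (ops n w (Function.update v i b)) := by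
  intro f hf
  exact h _ (hf.comp' (IsTranslation.comp w i v IsTranslation.id_map))

/-- `synCong` is compatible with the operations. -/
lemma synCong_ops (L : Set A) {n : ℕ} (w : Ω n) (u v : Fin n → A)
    (h : ∀ i, synCong ops L (u i) (v i)) :
    synCong ops L (ops n w u) (ops n w v) := by
  classical
  have E := synCong_equivalence ops L
  have key : ∀ s : Finset (Fin n),
      synCong ops L (ops n w u) (ops n w (fun i => if i ∈ s then v i else u i)) := by
    intro s
    induction s using Finset.induction with
    | empty => simpa using E.refl (ops n w u)
    | @insert j s hj ih =>
      refine E.trans ih ?_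
      set us : Fin n → A := fun i => if i ∈ s then v i else u i with hus
      have h1 : (fun i => if i ∈ insert j s then v i else u i)
          = Function.update us j (v j) := by
        funext i
        by_cases hij : i = j
        · subst hij; simp [hus, Function.update_self]
        · simp [Function.update_of_ne hij, hus, hij]
      have h2 : us = Function.update us j (u j) := by
        funext i
        by_cases hij : i = j
        · subst hij; simp [hus, hj]
        · simp [Function.update_of_ne hij]
      rw [h1]
      nth_rewrite 1 [h2]
      exact synCong_step (h j) w j us
  have := key Finset.univ
  simpa using this

/-- Homomorphisms send translations to translations. -/
lemma translation_hom {B : Type w} (opsB : ∀ n, Ω n → (Fin n → B) → B) (φ : A → B)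
    (hφ : ∀ (n : ℕ) (w : Ω n) (v : Fin n → A), φ (ops n w v) = opsB n w (fun i => φ (v i)))
    {f : A → A} (hf : IsTranslation ops f) :
    ∃ g : B → B, IsTranslation opsB g ∧ ∀ a, φ (f a) = g (φ a) := by
  induction hf with
  | id_map => exact ⟨id, .id_map, fun _ => rfl⟩
  | @comp n w i v f' hf' ih =>
    obtain ⟨g, hg, hgc⟩ := ih
    refine ⟨fun b => opsB n w (Function.update (fun j => φ (v j)) i (g b)),
      .comp w i _ hg, fun a => ?_⟩
    rw [hφ]
    congr 1
    funext j
    by_cases hj : j = i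
    · subst hj; simp [hgc]
    · simp [Function.update_of_ne hj]

variable [TopologicalSpace A]

/-- Preimages of sets under a map continuous for the discrete topology are clopen. -/
lemma clopen_preimage_bot {C : Type w} (ψ : A → C) (h : @Continuous A C _ ⊥ ψ)
    (s : Set C) : IsClopen (ψ ⁻¹' s) := by
  letI : TopologicalSpace C := ⊥
  haveI : DiscreteTopology C := ⟨rfl⟩
  exact ⟨(isClosed_discrete s).preimage h, (isOpen_discrete s).preimage h⟩

/-- A map with open fibers is continuous for the discrete topology. -/
lemma continuous_bot_of_fibers {C : Type w} (ψ : A → C)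
    (h : ∀ c, IsOpen (ψ ⁻¹' {c})) : @Continuous A C _ ⊥ ψ := by
  refine (@continuous_def A C _ ⊥ ψ).mpr fun s _ => ?_
  have : ψ ⁻¹' s = ⋃ c ∈ s, ψ ⁻¹' {c} := by ext a; simp
  rw [this]
  exact isOpen_biUnion fun c _ => h c

end AuxLemmas

/-- A Stone topological algebra `A` (compact Hausdorff 0-dimensional) is
profinite (i.e. residually finite, being already compact) if and only if the
syntactic congruence of every clopen subset is clopen in `A × A`. -/
theorem stmt7 {Ω : ℕ → Type u} {A : Type v} [TopologicalSpace A]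
    [CompactSpace A] [T2Space A] [TotallyDisconnectedSpace A]
    (ops : ∀ n, Ω n → (Fin n → A) → A)
    (hc : ∀ (n : ℕ) (w : Ω n), Continuous (ops n w)) :
    ResiduallyFinite ops ↔
      ∀ L : Set A, IsClopen L → IsClopen {p : A × A | synCong ops L p.1 p.2} := by
  classical
  constructor
  · -- residually finite ⇒ syntactic congruences of clopens are clopen
    intro hRF L hL
    have E := synCong_equivalence ops L
    set K : Set (A × A) := L ×ˢ Lᶜ with hKdef
    have hKc : IsCompact K := (hL.1.prod (isClosed_compl_iff.mpr hL.2)).isCompact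
    have hsep : ∀ p : K, ∃ (B : Type v) (_ : Fintype B)
        (opsB : ∀ n, Ω n → (Fin n → B) → B) (φ : A → B),
        @Continuous A B _ ⊥ φ ∧
        (∀ (n : ℕ) (w : Ω n) (v : Fin n → A), φ (ops n w v) = opsB n w (fun i => φ (v i))) ∧
        φ (p : A × A).1 ≠ φ (p : A × A).2 := by
      rintro ⟨⟨x, y⟩, hp⟩
      have hx : x ∈ L := hp.1
      have hy : y ∈ Lᶜ := hp.2
      exact hRF x y (fun h => hy (h ▸ hx))
    choose Bp finp opsBp φp hcont hhom hne using hsep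
    set U : K → Set (A × A) := fun p => {q | φp p q.1 ≠ φp p q.2} with hUdef
    have hUopen : ∀ p, IsOpen (U p) := by
      intro p
      letI : TopologicalSpace (Bp p) := ⊥
      haveI : DiscreteTopology (Bp p) := ⟨rfl⟩
      have hcm : Continuous fun q : A × A => (φp p q.1, φp p q.2) :=
        ((hcont p).comp continuous_fst).prodMk ((hcont p).comp continuous_snd)
      have : U p = (fun q : A × A => (φp p q.1, φp p q.2)) ⁻¹' {r | r.1 ≠ r.2} := rfl
      rw [this]
      exact (isOpen_discrete _).preimage hcm
    have hcover : K ⊆ ⋃ p, U p := fun q hq =>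
      Set.mem_iUnion.mpr ⟨⟨q, hq⟩, hne ⟨q, hq⟩⟩
    obtain ⟨T, hT⟩ := hKc.elim_finite_subcover U hUopen hcover
    -- the combined finite algebra
    set B' : Type v := ∀ p : {x // x ∈ T}, Bp p.1 with hB'def
    haveI : ∀ p : {x // x ∈ T}, Finite (Bp p.1) := fun p => @Finite.of_fintype _ (finp p.1)
    haveI : Finite B' := Pi.finite
    haveI : Fintype B' := Fintype.ofFinite B'
    set opsB' : ∀ n, Ω n → (Fin n → B') → B' :=
      fun n w g p => opsBp p.1 n w (fun i => g i p) with hopsB'def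
    set φ' : A → B' := fun a p => φp p.1 a with hφ'def
    have hhom' : ∀ (n : ℕ) (w : Ω n) (v : Fin n → A),
        φ' (ops n w v) = opsB' n w (fun i => φ' (v i)) := by
      intro n w v
      funext p
      exact hhom p.1 n w v
    have hφ'cont : @Continuous A B' _ ⊥ φ' := by
      refine continuous_bot_of_fibers φ' fun g => ?_
      have : φ' ⁻¹' {g} = ⋂ p : {x // x ∈ T}, φp p.1 ⁻¹' {g p} := by
        ext a
        simp only [Set.mem_preimage, Set.mem_singleton_iff, Set.mem_iInter, hφ'def]
        exact ⟨fun h p => congrFun h p, fun h => funext h⟩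
      rw [this]
      exact isOpen_iInter_of_finite fun p => (clopen_preimage_bot _ (hcont p.1) _).2
    -- the kernel of φ' saturates L
    have hsat : ∀ a b : A, φ' a = φ' b → (a ∈ L ↔ b ∈ L) := by
      intro a b hab
      by_contra hcon
      have key : ∀ x y : A, (x, y) ∈ K → φ' x = φ' y → False := by
        intro x y hxy hfeq
        have := hT hxy
        obtain ⟨p, hpT, hpU⟩ := Set.mem_iUnion₂.mp this
        exact hpU (congrFun hfeq ⟨p, hpT⟩)
      by_cases haL : a ∈ L
      · by_cases hbL : b ∈ L
        · exact hcon ⟨fun _ => hbL, fun _ => haL⟩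
        · exact key a b ⟨haL, hbL⟩ hab
      · by_cases hbL : b ∈ L
        · exact key b a ⟨hbL, haL⟩ hab.symm
        · exact hcon ⟨fun h => absurd h haL, fun h => absurd h hbL⟩
    -- the kernel of φ' is contained in the syntactic congruence
    have hker : ∀ a b : A, φ' a = φ' b → synCong ops L a b := by
      intro a b hab f hf
      obtain ⟨g, _, hgc⟩ := translation_hom opsB' φ' hhom' hf
      have : φ' (f a) = φ' (f b) := by rw [hgc, hgc, hab]
      exact hsat _ _ this
    -- the syntactic congruence is a finite union of clopen rectangles
    set S : Set (B' × B') :=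
      {r | ∃ a b : A, φ' a = r.1 ∧ φ' b = r.2 ∧ synCong ops L a b} with hSdef
    have hrect : {p : A × A | synCong ops L p.1 p.2}
        = ⋃ r ∈ S, (φ' ⁻¹' {r.1}) ×ˢ (φ' ⁻¹' {r.2}) := by
      ext q
      simp only [Set.mem_setOf_eq, Set.mem_iUnion, Set.mem_prod, Set.mem_preimage,
        Set.mem_singleton_iff]
      constructor
      · intro h
        exact ⟨(φ' q.1, φ' q.2), ⟨q.1, q.2, rfl, rfl, h⟩, rfl, rfl⟩
      · rintro ⟨r, ⟨a, b, ha, hb, hab⟩, h1, h2⟩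
        have h1' : synCong ops L q.1 a := hker _ _ (h1.trans ha.symm)
        have h2' : synCong ops L b q.2 := hker _ _ (hb.trans h2.symm)
        exact E.trans (E.trans h1' hab) h2'
    rw [hrect]
    exact (Set.toFinite S).isClopen_biUnion fun r _ =>
      (clopen_preimage_bot φ' hφ'cont {r.1}).prod (clopen_preimage_bot φ' hφ'cont {r.2})
  · -- clopen syntactic congruences ⇒ residually finite
    intro hσ a a' hne
    haveI : TotallySeparatedSpace A := loc_compact_t2_tot_disc_iff_tot_sep.mp ‹_›
    obtain ⟨L, hL, haL, ha'L⟩ := exists_isClopen_of_totally_separated hne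
    have E := synCong_equivalence ops L
    have hclo := hσ L hL
    set s : Setoid A := ⟨synCong ops L, E⟩ with hsdef
    set B : Type v := Quotient s with hBdef
    set φ : A → B := Quotient.mk s with hφdef
    set opsB : ∀ n, Ω n → (Fin n → B) → B :=
      fun n w g => φ (ops n w (fun i => (g i).out)) with hopsBdef
    have hhom : ∀ (n : ℕ) (w : Ω n) (v : Fin n → A),
        φ (ops n w v) = opsB n w (fun i => φ (v i)) := by
      intro n w v
      refine Quotient.sound ?_
      refine synCong_ops L w _ _ fun i => ?_
      have : (Quotient.mk s (v i)).out ≈ v i := Quotient.mk_out (v i)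
      exact E.symm this
    -- fibers of φ are clopen
    have hfiber : ∀ b : B, IsClopen (φ ⁻¹' {b}) := by
      intro b
      have heq : φ ⁻¹' {b} = (fun x : A => (x, b.out)) ⁻¹'
          {p : A × A | synCong ops L p.1 p.2} := by
        ext x
        simp only [Set.mem_preimage, Set.mem_singleton_iff, Set.mem_setOf_eq]
        constructor
        · intro h
          exact Quotient.exact (h.trans (Quotient.out_eq b).symm)
        · intro h
          exact (Quotient.sound h).trans (Quotient.out_eq b)
      rw [heq]
      exact hclo.preimage (continuous_id.prodMk continuous_const)
    have hφcont : @Continuous A B _ ⊥ φ := continuous_bot_of_fibers φ fun b => (hfiber b).2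
    -- B is finite
    have hfin : Finite B := by
      obtain ⟨T, hT⟩ := isCompact_univ.elim_finite_subcover (fun b : B => φ ⁻¹' {b})
        (fun b => (hfiber b).2) (fun x _ => Set.mem_iUnion.mpr ⟨φ x, rfl⟩)
      have hall : ∀ b : B, b ∈ T := by
        intro b
        have : b.out ∈ ⋃ b' ∈ T, φ ⁻¹' {b'} := hT (Set.mem_univ b.out)
        obtain ⟨b', hb'T, hb'⟩ := Set.mem_iUnion₂.mp this
        have hb : b = b' := (Quotient.out_eq b).symm.trans hb'
        exact hb ▸ hb'T
      have : (Set.univ : Set B).Finite :=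
        Set.Finite.subset T.finite_toSet fun b _ => hall b
      exact Set.finite_univ_iff.mp this
    haveI := hfin
    refine ⟨B, Fintype.ofFinite B, opsB, φ, hφcont, hhom, ?_⟩
    intro h
    have : synCong ops L a a' := Quotient.exact h
    exact ha'L ((this id IsTranslation.id_map).mp haL)
end

section
/- A Stone topological algebra A is profinite if and only if its translation monoid M(A) is an equicontinuous family of self-maps of A (with respect to the unique uniform structure of the compact space A). -/
universe u v w

/-- Translations are closed under composition. -/
lemma isTranslation_comp {Ω : ℕ → Type u} {A : Type v}
    {ops : ∀ n, Ω n → (Fin n → A) → A} {g f : A → A}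
    (hg : IsTranslation ops g) (hf : IsTranslation ops f) :
    IsTranslation ops (fun a => g (f a)) := by
  induction hg with
  | id_map => simpa using hf
  | comp w i v hg' ih => exact IsTranslation.comp w i v ih

/-- A homomorphism identifying two points identifies their images under any
translation. -/
lemma hom_translation_eq {Ω : ℕ → Type u} {A : Type v} {B : Type w}
    {ops : ∀ n, Ω n → (Fin n → A) → A} {opsB : ∀ n, Ω n → (Fin n → B) → B}
    {φ : A → B}
    (hhom : ∀ (n : ℕ) (w : Ω n) (v : Fin n → A),
      φ (ops n w v) = opsB n w (fun i => φ (v i)))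
    {f : A → A} (hf : IsTranslation ops f)
    {u v : A} (huv : φ u = φ v) : φ (f u) = φ (f v) := by
  induction hf with
  | id_map => exact huv
  | comp w i c hf' ih =>
    simp only [hhom]
    congr 1
    funext j
    rcases eq_or_ne j i with rfl | hj
    · simp [ih]
    · simp [Function.update_of_ne hj]

/-- The syntactic congruence is a congruence. -/
lemma synCong_isCongruence {Ω : ℕ → Type u} {A : Type v}
    (ops : ∀ n, Ω n → (Fin n → A) → A) (L : Set A) :
    IsCongruence ops (synCong ops L) := by
  refine ⟨synCong_equivalence ops L, ?_⟩
  intro n w u v huv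
  have single : ∀ (c : Fin n → A) (i : Fin n) {a b : A}, synCong ops L a b →
      synCong ops L (ops n w (Function.update c i a))
        (ops n w (Function.update c i b)) := by
    intro c i a b hab f hf
    exact hab _ (isTranslation_comp hf (IsTranslation.comp w i c IsTranslation.id_map))
  have key : ∀ k : ℕ, k ≤ n → synCong ops L (ops n w u)
      (ops n w (fun i => if (i : ℕ) < k then v i else u i)) := by
    intro k
    induction k with
    | zero =>
      intro _
      have : (fun i : Fin n => if (i : ℕ) < 0 then v i else u i) = u := by
        funext i; simp
      rw [this]
      exact (synCong_equivalence ops L).refl _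
    | succ k ih =>
      intro hk
      have hkn : k < n := hk
      set m : Fin n → A := fun i => if (i : ℕ) < k then v i else u i with hm
      have h1 : Function.update m ⟨k, hkn⟩ (u ⟨k, hkn⟩) = m := by
        funext j
        rcases eq_or_ne j ⟨k, hkn⟩ with rfl | hj
        · simp [hm]
        · simp [Function.update_of_ne hj]
      have h2 : (fun i : Fin n => if (i : ℕ) < k + 1 then v i else u i)
          = Function.update m ⟨k, hkn⟩ (v ⟨k, hkn⟩) := by
        funext j
        rcases eq_or_ne j ⟨k, hkn⟩ with rfl | hj
        · simp
        · have hjk : (j : ℕ) ≠ k := fun h => hj (Fin.ext h)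
          rw [Function.update_of_ne hj, hm]
          by_cases h : (j : ℕ) < k
          · simp [h, Nat.lt_succ_of_lt h]
          · have h' : ¬ (j : ℕ) < k + 1 := by omega
            simp [h, h']
      have step := single m ⟨k, hkn⟩ (huv ⟨k, hkn⟩)
      rw [h1, ← h2] at step
      exact (synCong_equivalence ops L).trans (ih (Nat.le_of_succ_le hk)) step
  have h := key n le_rfl
  have hv : (fun i : Fin n => if (i : ℕ) < n then v i else u i) = v := by
    funext i; simp [i.isLt]
  rwa [hv] at h

/-- A Stone topological algebra is profinite iff its translation monoid is
equicontinuous (entourages of the unique uniformity of a compact Hausdorff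
space being the supersets of open neighbourhoods of the diagonal). -/
theorem stmt9 {Ω : ℕ → Type u} {A : Type v} [TopologicalSpace A]
    [CompactSpace A] [T2Space A] [TotallyDisconnectedSpace A]
    (ops : ∀ n, Ω n → (Fin n → A) → A)
    (hc : ∀ (n : ℕ) (w : Ω n), Continuous (ops n w)) :
    ResiduallyFinite ops ↔
      ∀ α : Set (A × A), IsOpen α → (∀ x : A, (x, x) ∈ α) →
        ∀ x : A, ∃ U : Set A, IsOpen U ∧ x ∈ U ∧
          ∀ f : A → A, IsTranslation ops f →
            ∀ u ∈ U, ∀ v ∈ U, (f u, f v) ∈ α := by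
  constructor
  · -- Residually finite ⇒ equicontinuous
    intro hRF α hα hdiag x
    have hsep : ∀ p : (αᶜ : Set (A × A)), p.1.1 ≠ p.1.2 := by
      rintro ⟨⟨a, b⟩, hp⟩ h
      simp only at h
      subst h
      exact hp (hdiag a)
    choose B fB opsB φ hφc hφhom hφne using
      fun p : (αᶜ : Set (A × A)) => hRF p.1.1 p.1.2 (hsep p)
    -- The open cover of αᶜ
    set V : (αᶜ : Set (A × A)) → Set (A × A) :=
      fun p => {q | φ p q.1 ≠ φ p q.2} with hV
    have hVopen : ∀ p, IsOpen (V p) := by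
      intro p
      letI : TopologicalSpace (B p) := ⊥
      haveI : DiscreteTopology (B p) := ⟨rfl⟩
      have hcont : Continuous (fun q : A × A => (φ p q.1, φ p q.2)) :=
        ((hφc p).comp continuous_fst).prodMk ((hφc p).comp continuous_snd)
      exact hcont.isOpen_preimage {b : B p × B p | b.1 ≠ b.2} (isOpen_discrete _)
    have hcover : (αᶜ : Set (A × A)) ⊆ ⋃ p, V p := by
      intro q hq
      exact Set.mem_iUnion.2 ⟨⟨q, hq⟩, hφne ⟨q, hq⟩⟩
    have hKcompact : IsCompact (αᶜ : Set (A × A)) :=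
      hα.isClosed_compl.isCompact
    obtain ⟨t, ht⟩ := hKcompact.elim_finite_subcover V hVopen hcover
    refine ⟨⋂ p ∈ t, φ p ⁻¹' {φ p x}, ?_, ?_, ?_⟩
    · refine isOpen_biInter_finset fun p _ => ?_
      letI : TopologicalSpace (B p) := ⊥
      haveI : DiscreteTopology (B p) := ⟨rfl⟩
      exact (hφc p).isOpen_preimage _ (isOpen_discrete _)
    · simp
    · intro f hf u hu v hv
      by_contra hfa
      obtain ⟨p, hpt, hpV⟩ := Set.mem_iUnion₂.1 (ht hfa)
      have hu' : φ p u = φ p x := by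
        simpa using Set.mem_iInter₂.1 hu p hpt
      have hv' : φ p v = φ p x := by
        simpa using Set.mem_iInter₂.1 hv p hpt
      exact hpV (hom_translation_eq (hφhom p) hf (hu'.trans hv'.symm))
  · -- Equicontinuous ⇒ residually finite
    intro hEq a a' hne
    obtain ⟨L, hL, haL, ha'L⟩ := exists_isClopen_of_totally_separated hne
    set θ : A → A → Prop := synCong ops L with hθ
    have hθe : Equivalence θ := synCong_equivalence ops L
    have hθc := synCong_isCongruence ops L
    -- the basic entourage
    set α : Set (A × A) := (L ×ˢ L) ∪ (Lᶜ ×ˢ Lᶜ) with hα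
    have hαopen : IsOpen α := (hL.isOpen.prod hL.isOpen).union
      (hL.compl.isOpen.prod hL.compl.isOpen)
    have hαdiag : ∀ x : A, (x, x) ∈ α := by
      intro x
      by_cases h : x ∈ L
      · exact Or.inl ⟨h, h⟩
      · exact Or.inr ⟨h, h⟩
    have hαiff : ∀ {b b' : A}, (b, b') ∈ α → (b ∈ L ↔ b' ∈ L) := by
      rintro b b' (⟨h1, h2⟩ | ⟨h1, h2⟩)
      · exact iff_of_true h1 h2
      · exact iff_of_false h1 h2
    -- classes of θ are open
    have hclass : ∀ x : A, IsOpen {y | θ x y} := by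
      intro x
      rw [isOpen_iff_forall_mem_open]
      intro y hy
      obtain ⟨U, hU, hyU, hprop⟩ := hEq α hαopen hαdiag y
      refine ⟨U, fun z hz => ?_, hU, hyU⟩
      have hyz : θ y z := fun f hf => hαiff (hprop f hf y hyU z hz)
      exact hθe.trans hy hyz
    -- the quotient algebra
    set S : Setoid A := ⟨θ, hθe⟩ with hS
    have hfin : Finite (Quotient S) := by
      have hcov : (Set.univ : Set A) ⊆ ⋃ x : A, {y | θ x y} :=
        fun y _ => Set.mem_iUnion.2 ⟨y, hθe.refl y⟩
      obtain ⟨t, ht⟩ := isCompact_univ.elim_finite_subcover _ hclass hcov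
      refine Finite.of_surjective
        (fun p : {x // x ∈ t} => (Quotient.mk S p.1)) ?_
      intro q
      induction q using Quotient.ind with
      | _ b =>
        obtain ⟨x, hxt, hxb⟩ := Set.mem_iUnion₂.1 (ht (Set.mem_univ b))
        exact ⟨⟨x, hxt⟩, Quotient.sound hxb⟩
    haveI := hfin
    refine ⟨Quotient S, Fintype.ofFinite _,
      fun n w vq => Quotient.mk S (ops n w (fun i => (vq i).out)),
      fun a => Quotient.mk S a, ?_, ?_, ?_⟩
    · -- continuity into discrete quotient
      letI : TopologicalSpace (Quotient S) := ⊥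
      rw [continuous_def]
      intro s _
      rw [isOpen_iff_forall_mem_open]
      intro b hb
      refine ⟨{y | θ b y}, fun z hz => ?_, hclass b, hθe.refl b⟩
      have : (Quotient.mk S z) = Quotient.mk S b := Quotient.sound (hθe.symm hz)
      simpa [this] using hb
    · -- homomorphism property
      intro n w vv
      refine Quotient.sound ?_
      refine hθc.2 w vv (fun i => (Quotient.mk S (vv i)).out) (fun i => ?_)
      exact hθe.symm (Quotient.mk_out (vv i))
    · -- separation
      intro h
      have hx : θ a a' := Quotient.exact h
      exact ha'L ((hx id IsTranslation.id_map).mp haL)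
end

section
/- A Stone topological algebra A is profinite if and only if the translation monoid M(A) is relatively compact in C(A,A) endowed with the compact-open topology. -/
universe u v w

/-!
Forward: in a compact residually finite algebra every point has arbitrarily small clopen
neighbourhoods `D` cut out by finitely many homomorphisms onto finite algebras. Translations
descend along such homomorphisms, so only finitely many sets `f ⁻¹' D` arise from translations
`f`. Covering `A` by finitely many such `D` inside an entourage shows that `M(A)` is
equicontinuous, and Arzelà–Ascoli provides a compact `K ⊇ M(A)`.

Backward: separate `a ≠ a'` by a clopen set `L`. On `C(A, A)` the map `g ↦ g ⁻¹' L` is locally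
constant, so a compact `K ⊇ M(A)` yields only finitely many sets `f ⁻¹' L`. Hence the syntactic
congruence of `L` has open classes, and the quotient by it is a finite discrete algebra in which
`a` and `a'` stay apart.
-/

open Set Filter Topology

section Translation

variable {Ω : ℕ → Type u} {A : Type v} {ops : ∀ n, Ω n → (Fin n → A) → A}

theorem IsTranslation.comp_ops_update {f : A → A} (hf : IsTranslation ops f)
    {n : ℕ} (w : Ω n) (i : Fin n) (v : Fin n → A) :
    IsTranslation ops (fun a => f (ops n w (Function.update v i a))) := by
  induction hf with
  | id_map => exact .comp w i v .id_map
  | comp w' i' v' _ ih => exact .comp w' i' v' ih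

theorem IsTranslation.continuous [TopologicalSpace A]
    (hc : ∀ (n : ℕ) (w : Ω n), Continuous (ops n w))
    {f : A → A} (hf : IsTranslation ops f) : Continuous f := by
  induction hf with
  | id_map => exact continuous_id
  | comp w i v _ ih => exact (hc _ w).comp (continuous_const.update i ih)

theorem IsTranslation.exists_semiconj {f : A → A} (hf : IsTranslation ops f) {B : Type w}
    (opsB : ∀ n, Ω n → (Fin n → B) → B) (φ : A → B)
    (hφ : ∀ (n : ℕ) (w : Ω n) (v : Fin n → A), φ (ops n w v) = opsB n w fun i => φ (v i)) :
    ∃ g : B → B, ∀ a, φ (f a) = g (φ a) := by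
  induction hf with
  | id_map => exact ⟨id, fun _ => rfl⟩
  | comp w i v _ ih =>
    obtain ⟨g, hg⟩ := ih
    refine ⟨fun b => opsB _ w (Function.update (φ ∘ v) i (g b)), fun a => ?_⟩
    simp only [hφ, ← hg, ← Function.comp_update]
    rfl

end Translation

theorem Equivalence.rel_of_forall_rel_update {ι α β : Type*} [Finite ι] [DecidableEq ι]
    {r : β → β → Prop} (hr : Equivalence r) {s : α → α → Prop} {g : (ι → α) → β}
    (hg : ∀ (u : ι → α) (i : ι) ⦃x y : α⦄, s x y →
      r (g (Function.update u i x)) (g (Function.update u i y)))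
    {u v : ι → α} (huv : ∀ i, s (u i) (v i)) : r (g u) (g v) := by
  have : Fintype ι := Fintype.ofFinite ι
  suffices ∀ t : Finset ι, r (g u) (g (t.piecewise v u)) by
    simpa using this Finset.univ
  intro t
  induction t using Finset.induction_on with
  | empty => simpa using hr.refl (g u)
  | insert j t hj ih =>
    have hu : Function.update (t.piecewise v u) j (u j) = t.piecewise v u := by
      rw [← Finset.piecewise_eq_of_notMem t v u hj, Function.update_eq_self]
    have step := hg (t.piecewise v u) j (huv j)
    rw [hu] at step
    rw [Finset.piecewise_insert]
    exact hr.trans ih step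

section Syntactic

variable {Ω : ℕ → Type u} {A : Type v} (ops : ∀ n, Ω n → (Fin n → A) → A) (L : Set A)

theorem synCong_isCongruence_s10 : IsCongruence ops (synCong ops L) :=
  ⟨synCong_equivalence ops L, fun _ w _ _ =>
    (synCong_equivalence ops L).rel_of_forall_rel_update
      fun u i _ _ hxy _ hf => hxy _ (hf.comp_ops_update w i u)⟩

theorem synCong_saturates : Saturates (synCong ops L) L :=
  fun _ _ h => h id .id_map

end Syntactic

theorem IsCompact.finite_image_preimage {X Y : Type*} [TopologicalSpace X] [TopologicalSpace Y]
    [CompactSpace X] {K : Set C(X, Y)} (hK : IsCompact K) {L : Set Y} (hL : IsClopen L) :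
    ((fun g : C(X, Y) => ⇑g ⁻¹' L) '' K).Finite := by
  let N : C(X, Y) → Set C(X, Y) := fun g => {h | MapsTo h (g ⁻¹' L) L ∧ MapsTo h (g ⁻¹' L)ᶜ Lᶜ}
  have hN : ∀ g, N g ∈ 𝓝 g := fun g =>
    ((ContinuousMap.isOpen_setOfPred_mapsTo (hL.preimage g.continuous).isClosed.isCompact
      hL.isOpen).inter (ContinuousMap.isOpen_setOfPred_mapsTo
        (hL.preimage g.continuous).compl.isClosed.isCompact hL.compl.isOpen)).mem_nhds
      ⟨fun _ => id, fun _ => id⟩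
  have hconst : ∀ g, ∀ h ∈ N g, ⇑h ⁻¹' L = ⇑g ⁻¹' L := fun g h hh =>
    Subset.antisymm (fun x hx => by_contra fun hx' => hh.2 hx' hx) hh.1
  obtain ⟨t, -, hKt⟩ := hK.elim_nhds_subcover N fun g _ => hN g
  refine (t.finite_toSet.image fun g : C(X, Y) => ⇑g ⁻¹' L).subset ?_
  rintro _ ⟨h, hhK, rfl⟩
  obtain ⟨g, hgt, hhg⟩ := mem_iUnion₂.1 (hKt hhK)
  exact ⟨g, hgt, (hconst g h hhg).symm⟩

theorem isOpen_setOf_forall_mem_iff {X : Type*} [TopologicalSpace X] {𝒮 : Set (Set X)}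
    (h𝒮 : 𝒮.Finite) (hclopen : ∀ S ∈ 𝒮, IsClopen S) (x : X) :
    IsOpen {y | ∀ S ∈ 𝒮, y ∈ S ↔ x ∈ S} := by
  have : {y | ∀ S ∈ 𝒮, y ∈ S ↔ x ∈ S} = ⋂ S ∈ 𝒮, {y | y ∈ S ↔ x ∈ S} := by
    ext; simp
  rw [this]
  refine h𝒮.isOpen_biInter fun S hS => ?_
  by_cases hx : x ∈ S
  · simp only [hx, iff_true]
    exact (hclopen S hS).isOpen
  · simp only [hx, iff_false]
    exact (hclopen S hS).isClosed.isOpen_compl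

section Congruence

variable {Ω : ℕ → Type u} {A : Type v} {ops : ∀ n, Ω n → (Fin n → A) → A}

theorem IsCongruence.exists_finite_quotient [TopologicalSpace A] [CompactSpace A]
    {θ : A → A → Prop} (hθ : IsCongruence ops θ) (hopen : ∀ x, IsOpen {y | θ y x}) :
    ∃ (B : Type v) (_ : Fintype B) (opsB : ∀ n, Ω n → (Fin n → B) → B) (φ : A → B),
      @Continuous A B _ ⊥ φ ∧
      (∀ (n : ℕ) (w : Ω n) (v : Fin n → A), φ (ops n w v) = opsB n w (fun i => φ (v i))) ∧
      ∀ a a', φ a = φ a' → θ a a' := by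
  let s : Setoid A := ⟨θ, hθ.1⟩
  have hdisc : DiscreteTopology (Quotient s) := by
    refine discreteTopology_iff_isOpen_singleton.2 fun b => ?_
    induction b using Quotient.inductionOn with
    | h x =>
      rw [← isQuotientMap_quotient_mk'.isOpen_preimage]
      convert hopen x using 1
      ext y
      exact Quotient.eq
  have : Finite (Quotient s) := finite_of_compact_of_discrete
  refine ⟨Quotient s, .ofFinite _, fun n w v => ⟦ops n w fun i => (v i).out⟧, Quotient.mk s,
    ?_, fun n w v => Quotient.sound (hθ.2 w _ _ fun i => hθ.1.symm (Quotient.mk_out (v i))),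
    fun a a' => Quotient.exact⟩
  rw [← hdisc.eq_bot]
  exact continuous_quotient_mk'

theorem residuallyFinite_of_isCompact [TopologicalSpace A] [CompactSpace A] [T2Space A]
    [TotallyDisconnectedSpace A] {K : Set C(A, A)} (hK : IsCompact K)
    (hKM : ∀ f : A → A, IsTranslation ops f → ∃ g ∈ K, ⇑g = f) : ResiduallyFinite ops := by
  intro a a' hne
  obtain ⟨L, hL, haL, ha'L⟩ := exists_isClopen_of_totally_separated hne
  let 𝒯 := (· ⁻¹' L) '' {f : A → A | IsTranslation ops f}
  have h𝒯K : 𝒯 ⊆ (fun g : C(A, A) => ⇑g ⁻¹' L) '' K := by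
    rintro _ ⟨f, hf, rfl⟩
    obtain ⟨g, hgK, rfl⟩ := hKM f hf
    exact mem_image_of_mem _ hgK
  have hclopen : ∀ S ∈ 𝒯, IsClopen S := fun S hS => by
    obtain ⟨g, -, rfl⟩ := h𝒯K hS
    exact hL.preimage g.continuous
  have hclasses : ∀ x, {y | synCong ops L y x} = {y | ∀ S ∈ 𝒯, y ∈ S ↔ x ∈ S} := fun x => by
    ext y; simp [𝒯, synCong]
  obtain ⟨B, hB, opsB, φ, hφc, hφ, hker⟩ := (synCong_isCongruence_s10 ops L).exists_finite_quotient
    fun x => hclasses x ▸ isOpen_setOf_forall_mem_iff ((hK.finite_image_preimage hL).subset h𝒯K)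
      hclopen x
  exact ⟨B, hB, opsB, φ, hφc, hφ, fun h => ha'L ((synCong_saturates ops L a a' (hker a a' h)).1 haL)⟩

end Congruence

theorem Set.Finite.image_preimage_inter {α β : Type*} {𝓕 : Set (α → β)} {D E : Set β}
    (hD : ((· ⁻¹' D) '' 𝓕).Finite) (hE : ((· ⁻¹' E) '' 𝓕).Finite) :
    ((· ⁻¹' (D ∩ E)) '' 𝓕).Finite :=
  (hD.image2 (· ∩ ·) hE).subset <| by
    rintro _ ⟨f, hf, rfl⟩
    exact ⟨_, mem_image_of_mem _ hf, _, mem_image_of_mem _ hf, rfl⟩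

section Profinite

variable {Ω : ℕ → Type u} {A : Type v} {ops : ∀ n, Ω n → (Fin n → A) → A}

theorem finite_image_preimage_translation {B : Type w} [Finite B]
    (opsB : ∀ n, Ω n → (Fin n → B) → B) (φ : A → B)
    (hφ : ∀ (n : ℕ) (w : Ω n) (v : Fin n → A), φ (ops n w v) = opsB n w fun i => φ (v i))
    (S : Set B) : ((· ⁻¹' (φ ⁻¹' S)) '' {f : A → A | IsTranslation ops f}).Finite :=
  (Set.finite_range fun T : Set B => φ ⁻¹' T).subset <| by
    rintro _ ⟨f, hf, rfl⟩
    obtain ⟨g, hg⟩ := hf.exists_semiconj opsB φ hφ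
    exact ⟨g ⁻¹' S, by ext a; simp [hg]⟩

theorem ResiduallyFinite.exists_isClopen_subset [TopologicalSpace A] [CompactSpace A]
    (hRF : ResiduallyFinite ops) {p : A} {O : Set A} (hO : O ∈ 𝓝 p) :
    ∃ D ⊆ O, IsClopen D ∧ p ∈ D ∧ ((· ⁻¹' D) '' {f : A → A | IsTranslation ops f}).Finite := by
  let 𝒢 := {D : Set A // IsClopen D ∧ p ∈ D ∧
    ((· ⁻¹' D) '' {f : A → A | IsTranslation ops f}).Finite}
  have : Nonempty 𝒢 := ⟨⟨univ, isClopen_univ, trivial,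
    (finite_singleton univ).subset <| by rintro _ ⟨f, -, rfl⟩; exact preimage_univ⟩⟩
  have hdir : Directed (· ⊇ ·) (fun D : 𝒢 => D.1) := fun D E =>
    ⟨⟨D.1 ∩ E.1, D.2.1.inter E.2.1, ⟨D.2.2.1, E.2.2.1⟩, D.2.2.2.image_preimage_inter E.2.2.2⟩,
      inter_subset_left, inter_subset_right⟩
  have hsep : ∀ x ≠ p, ∃ D : 𝒢, x ∉ D.1 := fun x hx => by
    obtain ⟨B, hB, opsB, φ, hφc, hφ, hφp⟩ := hRF p x hx.symm
    have hclopen : IsClopen (φ ⁻¹' {φ p}) := by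
      let _ : TopologicalSpace B := ⊥
      have : DiscreteTopology B := ⟨rfl⟩
      exact (isClopen_discrete _).preimage hφc
    exact ⟨⟨_, hclopen, rfl, finite_image_preimage_translation opsB φ hφ _⟩, Ne.symm hφp⟩
  -- `⋂ 𝒢 = {p}` and `𝒢` is closed under `∩`, so by compactness a single member lies in `O`.
  obtain ⟨D, hDO⟩ := exists_subset_nhds_of_compactSpace hdir (fun D => D.2.1.isClosed)
    fun x hx => by
      by_cases hxp : x = p
      · exact hxp ▸ hO
      · obtain ⟨D, hxD⟩ := hsep x hxp
        exact absurd (mem_iInter.1 hx D) hxD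
  exact ⟨D.1, hDO, D.2⟩

end Profinite

theorem eventually_forall_mem_of_finite_image_preimage {X Y : Type*} [TopologicalSpace X]
    [TopologicalSpace Y] {𝓕 : Set (X → Y)} (hcont : ∀ f ∈ 𝓕, Continuous f) {D : Set Y}
    (hD : IsOpen D) (hfin : ((· ⁻¹' D) '' 𝓕).Finite) (x : X) :
    ∀ᶠ x' in 𝓝 x, ∀ f ∈ 𝓕, f x ∈ D → f x' ∈ D := by
  have hU : ⋂₀ {S ∈ (· ⁻¹' D) '' 𝓕 | x ∈ S} ∈ 𝓝 x := by
    refine (sInter_mem (hfin.subset (sep_subset _ _))).2 ?_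
    rintro _ ⟨⟨f, hf, rfl⟩, hx⟩
    exact (hD.preimage (hcont f hf)).mem_nhds hx
  filter_upwards [hU] with x' hx' f hf hfx
  exact hx' _ ⟨⟨f, hf, rfl⟩, hfx⟩

theorem Set.equicontinuous_of_finite_image_preimage {X Y : Type*} [TopologicalSpace X]
    [UniformSpace Y] [CompactSpace Y] {𝓕 : Set (X → Y)} (hcont : ∀ f ∈ 𝓕, Continuous f)
    (hbasis : ∀ y, ∀ O ∈ 𝓝 y, ∃ D ⊆ O, IsOpen D ∧ y ∈ D ∧ ((· ⁻¹' D) '' 𝓕).Finite) :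
    𝓕.Equicontinuous := by
  intro x V hV
  have hsquare : ∀ y, ∃ D, IsOpen D ∧ y ∈ D ∧ D ×ˢ D ⊆ V ∧ ((· ⁻¹' D) '' 𝓕).Finite := by
    intro y
    obtain ⟨O₁, h₁, O₂, h₂, hO⟩ := mem_nhds_prod_iff.1 (nhds_le_uniformity y hV)
    obtain ⟨D, hDO, hD, hyD, hfin⟩ := hbasis y _ (inter_mem h₁ h₂)
    exact ⟨D, hD, hyD, fun q hq => hO ⟨(hDO hq.1).1, (hDO hq.2).2⟩, hfin⟩
  choose D hD hyD hDV hfin using hsquare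
  obtain ⟨P, hP⟩ := isCompact_univ.elim_finite_subcover D hD fun y _ => mem_iUnion.2 ⟨y, hyD y⟩
  filter_upwards [P.eventually_all.2 fun p _ =>
    eventually_forall_mem_of_finite_image_preimage hcont (hD p) (hfin p) x] with x' hx' f
  obtain ⟨p, hp, hfx⟩ := mem_iUnion₂.1 (hP (mem_univ (f.1 x)))
  exact hDV p ⟨hfx, hx' p hp f.1 f.2 hfx⟩

theorem Set.Equicontinuous.exists_isCompact_continuousMap {X Y : Type*} [TopologicalSpace X]
    [UniformSpace Y] [CompactSpace Y] {𝓕 : Set (X → Y)} (h : 𝓕.Equicontinuous) :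
    ∃ K : Set C(X, Y), IsCompact K ∧ ∀ f ∈ 𝓕, ∃ g ∈ K, ⇑g = f := by
  have hcl := h.closure
  have himage : ContinuousMap.toFun '' {g : C(X, Y) | ⇑g ∈ closure 𝓕} = closure 𝓕 :=
    Subset.antisymm (by rintro _ ⟨g, hg, rfl⟩; exact hg)
      fun f hf => ⟨⟨f, hcl.continuous_of_mem hf⟩, hf, rfl⟩
  refine ⟨{g | ⇑g ∈ closure 𝓕}, ArzelaAscoli.isCompact_of_equicontinuous _ ?_ ?_,
    fun f hf => ⟨⟨f, h.continuous_of_mem hf⟩, subset_closure hf, rfl⟩⟩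
  · rw [himage]
    exact isClosed_closure.isCompact
  · exact hcl.comp fun g : {g : C(X, Y) | ⇑g ∈ closure 𝓕} => (⟨g.1, g.2⟩ : closure 𝓕)

/-- A Stone topological algebra is profinite iff its translation monoid is
relatively compact in `C(A,A)` with the compact-open topology. -/
theorem stmt10 {Ω : ℕ → Type u} {A : Type v} [TopologicalSpace A]
    [CompactSpace A] [T2Space A] [TotallyDisconnectedSpace A]
    (ops : ∀ n, Ω n → (Fin n → A) → A)
    (hc : ∀ (n : ℕ) (w : Ω n), Continuous (ops n w)) :
    ResiduallyFinite ops ↔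
      ∃ K : Set C(A, A), IsCompact K ∧
        ∀ f : A → A, IsTranslation ops f → ∃ g ∈ K, ⇑g = f := by
  refine ⟨fun hRF => ?_, fun ⟨K, hK, hKM⟩ => residuallyFinite_of_isCompact hK hKM⟩
  let _ : UniformSpace A := uniformSpaceOfCompactR1
  refine Set.Equicontinuous.exists_isCompact_continuousMap
    (Set.equicontinuous_of_finite_image_preimage (fun f hf => hf.continuous hc) fun y O hO => ?_)
  obtain ⟨D, hDO, hD, hyD, hfin⟩ := hRF.exists_isClopen_subset hO
  exact ⟨D, hDO, hD.isOpen, hyD, hfin⟩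
end
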